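/- Let n ≥ 1 and, for p ∈ {1, …, n}, let A_p = Z^{⊗(p−1)} ⊗ σ⁻ ⊗ I₂^{⊗(n−p)} be the Jordan–Wigner annihilation matrix in M_{2ⁿ}(ℂ). Then for all p, q: A_p A_q + A_q A_p = 0, A_pᴴ A_qᴴ + A_qᴴ A_pᴴ = 0, and A_p A_qᴴ + A_qᴴ A_p = δ_{pq} I; that is, the Jordan–Wigner matrices satisfy the canonical anticommutation relations. -/
import Mathlib


open Matrix

/-- The Pauli `Z` matrix. -/
def pauliZ : Matrix (Fin 2) (Fin 2) ℂ := !![1, 0; 0, -1]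

/-- The lowering matrix `σ⁻ = |0⟩⟨1|`. -/
def sigmaMinus : Matrix (Fin 2) (Fin 2) ℂ := !![0, 1; 0, 0]

/-- The Jordan–Wigner annihilation matrix `A_p = Z^{⊗(p−1)} ⊗ σ⁻ ⊗ I₂^{⊗(n−p)}` in
`M_{2ⁿ}(ℂ)`, with `ℂ^{2ⁿ}` identified with the `n`-fold tensor product of `ℂ²` (so that
entries of the iterated Kronecker product are products of single-qubit factors). -/
def jwAnnihilation (n : ℕ) (p : Fin n) : Matrix (Fin n → Fin 2) (Fin n → Fin 2) ℂ :=
  Matrix.of fun x y => ∏ j : Fin n,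
    if j < p then pauliZ (x j) (y j)
    else if j = p then sigmaMinus (x j) (y j)
    else (1 : Matrix (Fin 2) (Fin 2) ℂ) (x j) (y j)

namespace JWAux

abbrev M2 := Matrix (Fin 2) (Fin 2) ℂ

/-- Pure tensor (iterated Kronecker product) of `n` single-qubit matrices. -/
def pureTensor {n : ℕ} (F : Fin n → M2) : Matrix (Fin n → Fin 2) (Fin n → Fin 2) ℂ :=
  Matrix.of fun x y => ∏ j : Fin n, F j (x j) (y j)

lemma pureTensor_mul {n : ℕ} (F G : Fin n → M2) :
    pureTensor F * pureTensor G = pureTensor fun j => F j * G j := by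
  ext x y
  simp only [pureTensor, Matrix.mul_apply, Matrix.of_apply, ← Finset.prod_mul_distrib]
  rw [Fintype.prod_sum]

lemma pureTensor_conjTranspose {n : ℕ} (F : Fin n → M2) :
    (pureTensor F)ᴴ = pureTensor fun j => (F j)ᴴ := by
  ext x y
  simp [pureTensor, Matrix.conjTranspose_apply, star_prod]

lemma pureTensor_congr {n : ℕ} {F G : Fin n → M2} (h : ∀ j, F j = G j) :
    pureTensor F = pureTensor G := by
  have : F = G := funext h
  rw [this]

lemma pureTensor_zero {n : ℕ} (F : Fin n → M2) (i0 : Fin n) (h : F i0 = 0) :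
    pureTensor F = 0 := by
  ext x y
  simp only [pureTensor, Matrix.of_apply, Matrix.zero_apply]
  exact Finset.prod_eq_zero (Finset.mem_univ i0) (by simp [h])

lemma pureTensor_one {n : ℕ} : pureTensor (fun _ : Fin n => (1 : M2)) = 1 := by
  ext x y
  simp only [pureTensor, Matrix.of_apply]
  by_cases h : x = y
  · subst h
    simp [Matrix.one_apply]
  · rw [Matrix.one_apply_ne h]
    obtain ⟨j, hj⟩ := Function.ne_iff.mp h
    exact Finset.prod_eq_zero (Finset.mem_univ j) (by simp [Matrix.one_apply, hj])

lemma pureTensor_neg {n : ℕ} (F G : Fin n → M2) (i0 : Fin n)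
    (h : ∀ j, j ≠ i0 → G j = F j) (h0 : G i0 = -F i0) :
    pureTensor G = -pureTensor F := by
  ext x y
  simp only [pureTensor, Matrix.of_apply, Matrix.neg_apply]
  rw [Fintype.prod_eq_mul_prod_compl i0 (fun j => G j (x j) (y j)),
    Fintype.prod_eq_mul_prod_compl i0 (fun j => F j (x j) (y j))]
  have hc : (∏ j ∈ ({i0}ᶜ : Finset (Fin n)), G j (x j) (y j)) =
      ∏ j ∈ ({i0}ᶜ : Finset (Fin n)), F j (x j) (y j) := by
    refine Finset.prod_congr rfl fun j hj => ?_
    rw [h j (by simpa using hj)]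
  rw [hc, h0]
  simp [neg_mul]

lemma pureTensor_add {n : ℕ} (F G H : Fin n → M2) (i0 : Fin n)
    (hF : ∀ j, j ≠ i0 → F j = H j) (hG : ∀ j, j ≠ i0 → G j = H j)
    (h0 : F i0 + G i0 = H i0) :
    pureTensor F + pureTensor G = pureTensor H := by
  ext x y
  simp only [pureTensor, Matrix.of_apply, Matrix.add_apply]
  rw [Fintype.prod_eq_mul_prod_compl i0 (fun j => F j (x j) (y j)),
    Fintype.prod_eq_mul_prod_compl i0 (fun j => G j (x j) (y j)),
    Fintype.prod_eq_mul_prod_compl i0 (fun j => H j (x j) (y j))]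
  have hcF : (∏ j ∈ ({i0}ᶜ : Finset (Fin n)), F j (x j) (y j)) =
      ∏ j ∈ ({i0}ᶜ : Finset (Fin n)), H j (x j) (y j) := by
    refine Finset.prod_congr rfl fun j hj => ?_
    rw [hF j (by simpa using hj)]
  have hcG : (∏ j ∈ ({i0}ᶜ : Finset (Fin n)), G j (x j) (y j)) =
      ∏ j ∈ ({i0}ᶜ : Finset (Fin n)), H j (x j) (y j) := by
    refine Finset.prod_congr rfl fun j hj => ?_
    rw [hG j (by simpa using hj)]
  rw [hcF, hcG, ← add_mul, ← h0]
  simp [Matrix.add_apply]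

lemma pureTensor_anticomm {n : ℕ} (F G : Fin n → M2) (i0 : Fin n)
    (hswap : ∀ j, j ≠ i0 → G j * F j = F j * G j)
    (h0 : G i0 * F i0 = -(F i0 * G i0)) :
    pureTensor F * pureTensor G + pureTensor G * pureTensor F = 0 := by
  rw [pureTensor_mul, pureTensor_mul,
    pureTensor_neg (fun j => F j * G j) (fun j => G j * F j) i0 hswap h0]
  simp

/- 2×2 matrix facts -/

lemma ZZ : pauliZ * pauliZ = 1 := by
  ext i j
  fin_cases i <;> fin_cases j <;>
    simp [pauliZ, Matrix.mul_apply, Fin.sum_univ_two, Matrix.one_apply]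

lemma Zh : pauliZᴴ = pauliZ := by
  ext i j
  fin_cases i <;> fin_cases j <;> simp [pauliZ, Matrix.conjTranspose_apply]

lemma ss : sigmaMinus * sigmaMinus = 0 := by
  ext i j
  fin_cases i <;> fin_cases j <;>
    simp [sigmaMinus, Matrix.mul_apply, Fin.sum_univ_two]

lemma ZsZ : pauliZ * sigmaMinus = -(sigmaMinus * pauliZ) := by
  ext i j
  fin_cases i <;> fin_cases j <;>
    simp [pauliZ, sigmaMinus, Matrix.mul_apply, Fin.sum_univ_two]

lemma sH : sigmaMinusᴴ = !![0, 0; 1, 0] := by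
  ext i j
  fin_cases i <;> fin_cases j <;> simp [sigmaMinus, Matrix.conjTranspose_apply]

lemma car1 : sigmaMinus * sigmaMinusᴴ + sigmaMinusᴴ * sigmaMinus = 1 := by
  rw [sH]
  ext i j
  fin_cases i <;> fin_cases j <;>
    simp [sigmaMinus, Matrix.mul_apply, Fin.sum_univ_two, Matrix.one_apply]

/- Jordan–Wigner factors -/

def jwFactor {n : ℕ} (p : Fin n) (j : Fin n) : M2 :=
  if j < p then pauliZ else if j = p then sigmaMinus else 1

lemma jw_eq (n : ℕ) (p : Fin n) : jwAnnihilation n p = pureTensor (jwFactor p) := by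
  ext x y
  simp only [jwAnnihilation, pureTensor, Matrix.of_apply]
  refine Finset.prod_congr rfl fun j _ => ?_
  simp only [jwFactor]
  split_ifs <;> rfl

lemma jwFactor_self {n : ℕ} (p : Fin n) : jwFactor p p = sigmaMinus := by
  simp [jwFactor]

lemma jwFactor_lt {n : ℕ} {p j : Fin n} (h : j < p) : jwFactor p j = pauliZ := by
  simp [jwFactor, h]

lemma jwFactor_gt {n : ℕ} {p j : Fin n} (h : p < j) : jwFactor p j = 1 := by
  simp [jwFactor, not_lt.mpr h.le, h.ne']

/-- First CAR relation, for `p < q`. -/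
lemma car_aa_lt {n : ℕ} {p q : Fin n} (h : p < q) :
    jwAnnihilation n p * jwAnnihilation n q + jwAnnihilation n q * jwAnnihilation n p = 0 := by
  rw [jw_eq, jw_eq]
  refine pureTensor_anticomm _ _ p (fun j hj => ?_) ?_
  · rcases lt_or_gt_of_ne hj with hjp | hjp
    · rw [jwFactor_lt hjp, jwFactor_lt (hjp.trans h)]
    · rw [jwFactor_gt hjp, mul_one, one_mul]
  · rw [jwFactor_self, jwFactor_lt h, ZsZ]

lemma car_aa {n : ℕ} (p q : Fin n) :
    jwAnnihilation n p * jwAnnihilation n q + jwAnnihilation n q * jwAnnihilation n p = 0 := by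
  rcases lt_trichotomy p q with h | h | h
  · exact car_aa_lt h
  · subst h
    rw [jw_eq, pureTensor_mul,
      pureTensor_zero _ p (by rw [jwFactor_self, ss])]
    simp
  · rw [add_comm]
    exact car_aa_lt h

/-- Mixed CAR relation, off-diagonal, for `p < q`. -/
lemma car_mixed_lt {n : ℕ} {p q : Fin n} (h : p < q) :
    jwAnnihilation n p * (jwAnnihilation n q)ᴴ +
      (jwAnnihilation n q)ᴴ * jwAnnihilation n p = 0 := by
  rw [jw_eq, jw_eq, pureTensor_conjTranspose]
  refine pureTensor_anticomm (jwFactor p) (fun j => (jwFactor q j)ᴴ) p (fun j hj => ?_) ?_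
  · rcases lt_or_gt_of_ne hj with hjp | hjp
    · simp only [jwFactor_lt hjp, jwFactor_lt (hjp.trans h), Zh]
    · simp only [jwFactor_gt hjp, mul_one, one_mul]
  · simp only [jwFactor_self, jwFactor_lt h, Zh]
    exact ZsZ

lemma car_mixed {n : ℕ} (p q : Fin n) :
    jwAnnihilation n p * (jwAnnihilation n q)ᴴ +
      (jwAnnihilation n q)ᴴ * jwAnnihilation n p =
      if p = q then (1 : Matrix (Fin n → Fin 2) (Fin n → Fin 2) ℂ) else 0 := by
  rcases lt_trichotomy p q with h | h | h
  · rw [if_neg h.ne]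
    exact car_mixed_lt h
  · subst h
    rw [if_pos rfl, jw_eq, pureTensor_conjTranspose, pureTensor_mul, pureTensor_mul]
    rw [pureTensor_add _ _ (fun _ => (1 : M2)) p ?_ ?_ ?_]
    · exact pureTensor_one
    · intro j hj
      rcases lt_or_gt_of_ne hj with hjp | hjp
      · rw [jwFactor_lt hjp, Zh, ZZ]
      · rw [jwFactor_gt hjp]
        simp
    · intro j hj
      rcases lt_or_gt_of_ne hj with hjp | hjp
      · rw [jwFactor_lt hjp, Zh, ZZ]
      · rw [jwFactor_gt hjp]
        simp
    · rw [jwFactor_self]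
      exact car1
  · rw [if_neg h.ne']
    have h2 := car_mixed_lt h
    have := congrArg Matrix.conjTranspose h2
    simpa [Matrix.conjTranspose_add, Matrix.conjTranspose_mul] using this

end JWAux

/-- The Jordan–Wigner matrices satisfy the canonical anticommutation relations: for all
`p, q`, `A_p A_q + A_q A_p = 0`, `A_pᴴ A_qᴴ + A_qᴴ A_pᴴ = 0`, and
`A_p A_qᴴ + A_qᴴ A_p = δ_{pq} I`. -/
theorem jordanWigner_car (n : ℕ) (hn : 1 ≤ n) (p q : Fin n) :
    jwAnnihilation n p * jwAnnihilation n q + jwAnnihilation n q * jwAnnihilation n p = 0 ∧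
    (jwAnnihilation n p)ᴴ * (jwAnnihilation n q)ᴴ +
      (jwAnnihilation n q)ᴴ * (jwAnnihilation n p)ᴴ = 0 ∧
    jwAnnihilation n p * (jwAnnihilation n q)ᴴ +
      (jwAnnihilation n q)ᴴ * jwAnnihilation n p =
        if p = q then (1 : Matrix (Fin n → Fin 2) (Fin n → Fin 2) ℂ) else 0 := by
  refine ⟨JWAux.car_aa p q, ?_, JWAux.car_mixed p q⟩
  have h := congrArg Matrix.conjTranspose (JWAux.car_aa p q)
  rw [add_comm]
  simpa [Matrix.conjTranspose_add, Matrix.conjTranspose_mul] using h
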